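/- arXiv:1409.1458 — 3 statements merged into one kernel-verified Lean document; each statement's English description precedes it below -/
import Mathlib

section
/- If ‖x_i‖ ≤ 1 for all i = 1,…,n, then 0 ≤ σ_min ≤ ñ, where ñ := max_{1≤k≤K} n_k is the size of the largest block of the partition. -/
/-!
For each block, `(λn)² ‖A_[k] α_[k]‖² ≤ ‖∑_{i ∈ I_k} α_i x_i‖² ≤ n_k ∑_{i ∈ I_k} α_i²` by
Cauchy–Schwarz and `‖x_i‖ ≤ 1`; summing over the blocks and dropping `-‖Aα‖² ≤ 0` bounds every
quotient in the supremum by `ñ`. A vector supported on a single coordinate makes the two energies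
equal, so the quotient `0` is attained and `σ_min ≥ 0`; when `n = 0` the supremum is over the empty
set, which `sSup` evaluates to `0`.
-/

open Finset MeasureTheory

noncomputable section

/-- Squared Euclidean norm of a finite real vector. -/
def sqnorm {m : ℕ} (v : Fin m → ℝ) : ℝ := ∑ j, v j ^ 2

/-- Euclidean norm of a finite real vector. -/
def euclNorm {m : ℕ} (v : Fin m → ℝ) : ℝ := Real.sqrt (sqnorm v)

/-- Euclidean inner product. -/
def dotp {m : ℕ} (u v : Fin m → ℝ) : ℝ := ∑ j, u j * v j

/-- `g` is the (real-valued) Fenchel conjugate of `f`: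
`g u` is the least upper bound of `z ↦ u*z - f z`. -/
def IsFenchelConj (f g : ℝ → ℝ) : Prop :=
  ∀ u : ℝ, IsLUB (Set.range fun z : ℝ => u * z - f z) (g u)

/-- `f` is smooth with constant `c`: differentiable with `c`-Lipschitz derivative. -/
def SmoothWith (c : ℝ) (f : ℝ → ℝ) : Prop :=
  Differentiable ℝ f ∧ ∀ z z' : ℝ, |deriv f z - deriv f z'| ≤ c * |z - z'|

/-- `g : ℝ → ℝ` is `γ`-strongly convex. -/
def StrongConvexWith (γ : ℝ) (g : ℝ → ℝ) : Prop :=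
  ConvexOn ℝ Set.univ fun u => g u - γ / 2 * u ^ 2

variable {n d K : ℕ}

/-- `A α` where the `i`-th column of `A` is `x i / (λ n)`. -/
def matA (lam : ℝ) (x : Fin n → Fin d → ℝ) (α : Fin n → ℝ) : Fin d → ℝ :=
  ∑ i, (α i / (lam * n)) • x i

/-- The block-`k` subvector `α_[k]` of `α`. -/
def blkOf (part : Fin n → Fin K) (k : Fin K) (α : Fin n → ℝ) :
    {i : Fin n // part i = k} → ℝ :=
  fun i => α i.1

/-- `A_[k] β`: the block-`k` submatrix of `A` applied to a block-`k` vector. -/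
def blkA (lam : ℝ) (x : Fin n → Fin d → ℝ) (part : Fin n → Fin K) (k : Fin K)
    (β : {i : Fin n // part i = k} → ℝ) : Fin d → ℝ :=
  ∑ i : {i : Fin n // part i = k}, (β i / (lam * n)) • x i.1

/-- `α⟨k←β⟩`: replace the block-`k` coordinates of `α` by `β`. -/
def updBlk (part : Fin n → Fin K) (k : Fin K) (α : Fin n → ℝ)
    (β : {i : Fin n // part i = k} → ℝ) : Fin n → ℝ :=
  fun i => if h : part i = k then β ⟨i, h⟩ else α i

/-- `ι_k β`: zero-padding of a block-`k` vector to a full vector. -/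
def padBlk (part : Fin n → Fin K) (k : Fin K)
    (β : {i : Fin n // part i = k} → ℝ) : Fin n → ℝ :=
  fun i => if h : part i = k then β ⟨i, h⟩ else 0

/-- The primal objective `P(w)`. -/
def primalObj (lam : ℝ) (x : Fin n → Fin d → ℝ) (l : Fin n → ℝ → ℝ)
    (w : Fin d → ℝ) : ℝ :=
  lam / 2 * sqnorm w + (1 / (n : ℝ)) * ∑ i, l i (dotp w (x i))

/-- The dual objective `D(α)`. -/
def dualObj (lam : ℝ) (x : Fin n → Fin d → ℝ) (lstar : Fin n → ℝ → ℝ)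
    (α : Fin n → ℝ) : ℝ :=
  -(lam / 2) * sqnorm (matA lam x α) - (1 / (n : ℝ)) * ∑ i, lstar i (-(α i))

/-- The local suboptimality `ε_{D,k}(α)` on block `k`. -/
def epsD (lam : ℝ) (x : Fin n → Fin d → ℝ) (lstar : Fin n → ℝ → ℝ)
    (part : Fin n → Fin K) (k : Fin K) (α : Fin n → ℝ) : ℝ :=
  ⨆ β : {i : Fin n // part i = k} → ℝ,
    dualObj lam x lstar (updBlk part k α β) - dualObj lam x lstar α

/-- `σ_min`: the supremum over nonzero `α` of
`λ²n²·(Σ_k ‖A_[k]α_[k]‖² − ‖Aα‖²)/‖α‖²`. -/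
def sigmaMin (lam : ℝ) (x : Fin n → Fin d → ℝ) (part : Fin n → Fin K) : ℝ :=
  sSup { r : ℝ | ∃ α : Fin n → ℝ, α ≠ 0 ∧
    r = lam ^ 2 * (n : ℝ) ^ 2 *
      ((∑ k, sqnorm (blkA lam x part k (blkOf part k α))) - sqnorm (matA lam x α)) /
        sqnorm α }

/-- The local dual objective `D_k(β; w̄)` on block `k`. -/
def locDual (lam : ℝ) (x : Fin n → Fin d → ℝ) (lstar : Fin n → ℝ → ℝ)
    (part : Fin n → Fin K) (k : Fin K) (wbar : Fin d → ℝ)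
    (β : {i : Fin n // part i = k} → ℝ) : ℝ :=
  -(lam / 2) * sqnorm (wbar + blkA lam x part k β)
    - (1 / (n : ℝ)) * ∑ i : {i : Fin n // part i = k}, lstar i.1 (-(β i))
    + lam / 2 * sqnorm wbar

/-- The local primal objective `P_k(v; w̄)` on block `k`. -/
def locPrimal (lam : ℝ) (x : Fin n → Fin d → ℝ) (l : Fin n → ℝ → ℝ)
    (part : Fin n → Fin K) (k : Fin K) (wbar v : Fin d → ℝ) : ℝ :=
  (1 / (n : ℝ)) * ∑ i : {i : Fin n // part i = k}, l i.1 (dotp (wbar + v) (x i.1))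
    + lam / 2 * sqnorm v

/-- Run `H` iterations of the coordinate-wise step `st`, where `ω` lists
the (randomly chosen) coordinates used in the successive iterations. -/
def iterRun {γ : Type*} {ι : Type*} (st : ι → γ → γ) :
    (H : ℕ) → (Fin H → ι) → γ → γ
  | 0, _, b => b
  | H + 1, ω, b => iterRun st H (fun h => ω h.succ) (st (ω 0) b)

lemma sqnorm_nonneg {m : ℕ} (v : Fin m → ℝ) : 0 ≤ sqnorm v :=
  sum_nonneg fun _ _ => sq_nonneg _

lemma sqnorm_pos {m : ℕ} {v : Fin m → ℝ} (hv : v ≠ 0) : 0 < sqnorm v := by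
  obtain ⟨i, hi⟩ := Function.ne_iff.mp hv
  exact sum_pos' (fun _ _ => sq_nonneg _) ⟨i, mem_univ i, pow_two_pos_of_ne_zero hi⟩

lemma sqnorm_zero {m : ℕ} : sqnorm (0 : Fin m → ℝ) = 0 := by
  simp [sqnorm]

lemma sqnorm_smul {m : ℕ} (c : ℝ) (v : Fin m → ℝ) : sqnorm (c • v) = c ^ 2 * sqnorm v := by
  simp only [sqnorm, Pi.smul_apply, smul_eq_mul, mul_pow, mul_sum]

lemma sqnorm_le_one_of_euclNorm_le_one {m : ℕ} {v : Fin m → ℝ} (hv : euclNorm v ≤ 1) :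
    sqnorm v ≤ 1 :=
  Real.sqrt_le_one.mp hv

lemma sqnorm_sum_smul_le {m : ℕ} {ι : Type*} [Fintype ι] (c : ι → ℝ)
    (y : ι → Fin m → ℝ) (hy : ∀ i, sqnorm (y i) ≤ 1) :
    sqnorm (∑ i, c i • y i) ≤ Fintype.card ι * ∑ i, c i ^ 2 := by
  have hcoord : ∀ j, (∑ i, c i * y i j) ^ 2 ≤ Fintype.card ι * ∑ i, c i ^ 2 * y i j ^ 2 :=
    fun j => by
      simpa [mul_pow] using sq_sum_le_card_mul_sum_sq (s := univ) (f := fun i => c i * y i j)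
  calc sqnorm (∑ i, c i • y i)
      = ∑ j, (∑ i, c i * y i j) ^ 2 := by simp [sqnorm]
    _ ≤ ∑ j, Fintype.card ι * ∑ i, c i ^ 2 * y i j ^ 2 := sum_le_sum fun j _ => hcoord j
    _ = Fintype.card ι * ∑ i, c i ^ 2 * sqnorm (y i) := by
        simp only [sqnorm, mul_sum]
        exact sum_comm
    _ ≤ Fintype.card ι * ∑ i, c i ^ 2 := by
        gcongr with i
        exact mul_le_of_le_one_right (sq_nonneg _) (hy i)

lemma blkA_eq_inv_smul (lam : ℝ) (x : Fin n → Fin d → ℝ) (part : Fin n → Fin K) (k : Fin K)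
    (β : {i : Fin n // part i = k} → ℝ) :
    blkA lam x part k β = (lam * n)⁻¹ • ∑ i, β i • x i.1 := by
  simp only [blkA, smul_sum, smul_smul, div_eq_inv_mul]

lemma sq_mul_sqnorm_blkA_le {lam : ℝ} {x : Fin n → Fin d → ℝ} (hx : ∀ i, sqnorm (x i) ≤ 1)
    (part : Fin n → Fin K) (k : Fin K) (β : {i : Fin n // part i = k} → ℝ) :
    (lam * n) ^ 2 * sqnorm (blkA lam x part k β) ≤
      Fintype.card {i : Fin n // part i = k} * ∑ i, β i ^ 2 := by
  have hscale : (lam * n * (lam * n)⁻¹) ^ 2 ≤ 1 := by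
    rcases eq_or_ne (lam * n) 0 with h | h
    · simp [h]
    · rw [mul_inv_cancel₀ h, one_pow]
  rw [blkA_eq_inv_smul, sqnorm_smul, ← mul_assoc, ← mul_pow]
  calc (lam * n * (lam * n)⁻¹) ^ 2 * sqnorm (∑ i, β i • x i.1)
      ≤ sqnorm (∑ i, β i • x i.1) := mul_le_of_le_one_left (sqnorm_nonneg _) hscale
    _ ≤ _ := sqnorm_sum_smul_le β _ fun i => hx i.1

lemma sq_mul_sum_sqnorm_blkA_le {lam : ℝ} {x : Fin n → Fin d → ℝ} (hx : ∀ i, sqnorm (x i) ≤ 1)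
    (part : Fin n → Fin K) (α : Fin n → ℝ) :
    (lam * n) ^ 2 * ∑ k, sqnorm (blkA lam x part k (blkOf part k α)) ≤
      (univ.sup fun k => Fintype.card {i : Fin n // part i = k} : ℕ) * sqnorm α := by
  set ntilde := univ.sup fun k => Fintype.card {i : Fin n // part i = k}
  have hcard : ∀ k, (Fintype.card {i : Fin n // part i = k} : ℝ) ≤ ntilde :=
    fun k => by
      exact_mod_cast le_sup (f := fun k => Fintype.card {i : Fin n // part i = k}) (mem_univ k)
  calc (lam * n) ^ 2 * ∑ k, sqnorm (blkA lam x part k (blkOf part k α))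
      ≤ ∑ k, (Fintype.card {i : Fin n // part i = k} : ℝ) * ∑ i : {i // part i = k}, α i ^ 2 := by
        rw [mul_sum]
        exact sum_le_sum fun k _ => sq_mul_sqnorm_blkA_le hx part k _
    _ ≤ ∑ k, (ntilde : ℝ) * ∑ i : {i // part i = k}, α i ^ 2 :=
        sum_le_sum fun k _ =>
          mul_le_mul_of_nonneg_right (hcard k) (sum_nonneg fun _ _ => sq_nonneg _)
    _ = ntilde * sqnorm α := by
        rw [← mul_sum, Fintype.sum_fiberwise part fun i => α i ^ 2, sqnorm]

lemma sigmaMin_le_sup_card (lam : ℝ) {x : Fin n → Fin d → ℝ} (hx : ∀ i, sqnorm (x i) ≤ 1)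
    (part : Fin n → Fin K) :
    sigmaMin lam x part ≤ (univ.sup fun k => Fintype.card {i : Fin n // part i = k} : ℕ) := by
  refine Real.sSup_le ?_ (Nat.cast_nonneg _)
  rintro r ⟨α, hα, rfl⟩
  have hblocks := sq_mul_sum_sqnorm_blkA_le (lam := lam) hx part α
  have hcoupling := mul_nonneg (sq_nonneg (lam * n)) (sqnorm_nonneg (matA lam x α))
  rw [div_le_iff₀ (sqnorm_pos hα), ← mul_pow, mul_sub]
  linarith

lemma blkA_blkOf_single (lam : ℝ) (x : Fin n → Fin d → ℝ) (part : Fin n → Fin K) (k : Fin K)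
    (i : Fin n) (c : ℝ) :
    blkA lam x part k (blkOf part k (Pi.single i c)) =
      if part i = k then (c / (lam * n)) • x i else 0 := by
  split_ifs with hi
  · subst hi
    rw [blkA, Fintype.sum_eq_single ⟨i, rfl⟩]
    · simp [blkOf]
    · intro j hj
      simp [blkOf, Subtype.ext_iff.not.mp hj]
  · refine sum_eq_zero fun j _ => ?_
    have : j.1 ≠ i := fun h => hi (h ▸ j.2)
    simp [blkOf, this]

lemma matA_single (lam : ℝ) (x : Fin n → Fin d → ℝ) (i : Fin n) (c : ℝ) :
    matA lam x (Pi.single i c) = (c / (lam * n)) • x i := by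
  rw [matA, Fintype.sum_eq_single i]
  · simp
  · intro j hj
    simp [hj]

lemma sum_sqnorm_blkA_single (lam : ℝ) (x : Fin n → Fin d → ℝ) (part : Fin n → Fin K)
    (i : Fin n) (c : ℝ) :
    ∑ k, sqnorm (blkA lam x part k (blkOf part k (Pi.single i c))) =
      sqnorm (matA lam x (Pi.single i c)) := by
  simp [blkA_blkOf_single, matA_single, apply_ite sqnorm, sqnorm_zero]

lemma sigmaMin_nonneg (lam : ℝ) (x : Fin n → Fin d → ℝ) (part : Fin n → Fin K) :
    0 ≤ sigmaMin lam x part := by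
  rcases isEmpty_or_nonempty (Fin n) with hn | hn
  · refine Real.sSup_nonneg ?_
    rintro r ⟨α, hα, -⟩
    exact absurd (Subsingleton.elim α 0) hα
  · obtain ⟨i⟩ := hn
    refine Real.sSup_nonneg' ⟨0, ⟨Pi.single i 1, by simp, ?_⟩, le_rfl⟩
    rw [sum_sqnorm_blkA_single, sub_self, mul_zero, zero_div]

theorem sigmaMin_bounds_general
    (n d K : ℕ)
    (lam : ℝ)
    (x : Fin n → Fin d → ℝ) (hx : ∀ i, euclNorm (x i) ≤ 1)
    (part : Fin n → Fin K)
    (ntilde : ℕ)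
    (hnt : ntilde = Finset.univ.sup fun k : Fin K =>
      Fintype.card {i : Fin n // part i = k}) :
    0 ≤ sigmaMin lam x part ∧ sigmaMin lam x part ≤ (ntilde : ℝ) := by
  subst hnt
  exact ⟨sigmaMin_nonneg lam x part,
    sigmaMin_le_sup_card lam (fun i => sqnorm_le_one_of_euclNorm_le_one (hx i)) part⟩

/-- if `‖x_i‖ ≤ 1` for all `i`, then `0 ≤ σ_min ≤ ñ`. -/
theorem sigmaMin_bounds
    (n d K : ℕ) (hn : 0 < n) (hd : 0 < d) (hK : 0 < K)
    (lam : ℝ) (hlam : 0 < lam)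
    (x : Fin n → Fin d → ℝ) (hx : ∀ i, euclNorm (x i) ≤ 1)
    (part : Fin n → Fin K) (hpart : ∀ k, ∃ i, part i = k)
    (ntilde : ℕ)
    (hnt : ntilde = Finset.univ.sup fun k : Fin K =>
      Fintype.card {i : Fin n // part i = k}) :
    0 ≤ sigmaMin lam x part ∧ sigmaMin lam x part ≤ (ntilde : ℝ) :=
  sigmaMin_bounds_general n d K lam x hx part ntilde hnt
end
end

section
/- Assume each ℓ_i is convex and each conjugate ℓ_i* is γ-strongly convex with γ ≥ 0. Fix a block k, w̄ ∈ ℝ^d, and β ∈ ℝ^{n_k}; set v := A_[k]β and w := w̄ + v, and for each i ∈ I_k choose u_i ∈ ℝ with −u_i ∈ ∂ℓ_i(x_iᵀw) (∂ denoting the subdifferential). Let β' be the random result of one LocalSDCA step on block k applied to β. Then for every s ∈ [0,1]: E[D_k(β'; w̄)] − D_k(β; w̄) ≥ (s/n_k)·(P_k(v; w̄) − D_k(β; w̄)) − (1/(2λn²))·(1/n_k)·Σ_{i∈I_k} (s²·‖x_i‖² − λnγ·s·(1−s))·(u_i − β_i)². -/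
open Finset MeasureTheory

noncomputable section

variable {n d K : ℕ}

/-!
Move coordinate `i` only a fraction `s` of the way towards the subgradient value `u i`,
i.e. to `β i + s (u i - β i)`. The quadratic term of `D_k` changes by an explicit amount,
while strong convexity of `ℓ_i*` together with the Fenchel–Young equality
`ℓ_i*(-u_i) = -u_i z_i - ℓ_i(z_i)` at `z_i = x_iᵀw` bounds the change of the conjugate term.
This gives, for every `i`, a lower bound on the improvement in terms of the Fenchel–Young gap
`ℓ_i(z_i) + ℓ_i*(-β_i) + β_i z_i`; the exact maximiser does at least as well, and these gaps
average to the local duality gap `P_k(v; w̄) - D_k(β; w̄)`.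
-/

section Vectors

variable {m : ℕ}

lemma dotp_comm (a b : Fin m → ℝ) : dotp a b = dotp b a := by
  simp only [dotp, mul_comm]

lemma sqnorm_add_smul (a b : Fin m → ℝ) (r : ℝ) :
    sqnorm (a + r • b) = sqnorm a + 2 * r * dotp a b + r ^ 2 * sqnorm b := by
  simp only [sqnorm, dotp, Finset.mul_sum, ← Finset.sum_add_distrib]
  refine Finset.sum_congr rfl fun j _ => ?_
  simp only [Pi.add_apply, Pi.smul_apply, smul_eq_mul]
  ring

lemma two_mul_dotp_add_self (a b : Fin m → ℝ) :
    2 * dotp (a + b) b = sqnorm (a + b) - sqnorm a + sqnorm b := by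
  simp only [sqnorm, dotp, Finset.mul_sum, ← Finset.sum_add_distrib, ← Finset.sum_sub_distrib]
  refine Finset.sum_congr rfl fun j _ => ?_
  simp only [Pi.add_apply]
  ring

end Vectors

lemma Finset.sum_apply_update {ι M α : Type*} [Fintype ι] [DecidableEq ι] [AddCommGroup M]
    (F : ι → α → M) (β : ι → α) (i : ι) (c : α) :
    ∑ j, F j (Function.update β i c j) = ∑ j, F j (β j) + (F i c - F i (β i)) := by
  simp only [Function.apply_update F, Finset.sum_update_of_mem (Finset.mem_univ i),
    Fintype.sum_eq_add_sum_compl i (fun j => F j (β j)), Finset.compl_eq_univ_sdiff]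
  abel

lemma Finset.sum_div_card_le_sub {ι : Type*} [Fintype ι] [Nonempty ι] {a b : ι → ℝ} {c : ℝ}
    (h : ∀ i, a i ≤ b i - c) :
    (∑ i, a i) / Fintype.card ι ≤ (∑ i, b i) / Fintype.card ι - c := by
  have hcard : (0 : ℝ) < Fintype.card ι := by exact_mod_cast Fintype.card_pos
  rw [div_le_iff₀ hcard, sub_mul, div_mul_cancel₀ _ hcard.ne', mul_comm, ← nsmul_eq_mul,
    ← Finset.card_univ, ← Finset.sum_const, ← Finset.sum_sub_distrib]
  exact Finset.sum_le_sum fun i _ => h i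

lemma IsFenchelConj.apply_eq_of_subgradient {f g : ℝ → ℝ} (hfg : IsFenchelConj f g) {p z : ℝ}
    (hp : ∀ y, f z + p * (y - z) ≤ f y) : g p = p * z - f z := by
  refine (hfg p).unique (IsGreatest.isLUB ⟨⟨z, rfl⟩, ?_⟩)
  rintro _ ⟨y, rfl⟩
  linarith [hp y]

lemma StrongConvexWith.apply_combo_le {γ : ℝ} {g : ℝ → ℝ} (hg : StrongConvexWith γ g)
    (a b : ℝ) {s : ℝ} (hs0 : 0 ≤ s) (hs1 : s ≤ 1) :
    g ((1 - s) * a + s * b) ≤ (1 - s) * g a + s * g b - γ / 2 * (s * (1 - s)) * (a - b) ^ 2 := by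
  have h := hg.2 (Set.mem_univ a) (Set.mem_univ b) (sub_nonneg.2 hs1) hs0 (by ring)
  simp only [smul_eq_mul] at h
  linarith

/-- Nonnegative when `g` is the conjugate of `f`, and zero exactly when `-b ∈ ∂f(z)`. -/
def fenchelYoungGap (f g : ℝ → ℝ) (b z : ℝ) : ℝ := f z + g (-b) + b * z

section Block

variable {lam : ℝ} {x : Fin n → Fin d → ℝ} {l lstar : Fin n → ℝ → ℝ}
  {part : Fin n → Fin K} {k : Fin K} {wbar : Fin d → ℝ}

lemma blkA_update (β : {i : Fin n // part i = k} → ℝ) (i : {i : Fin n // part i = k}) (c : ℝ) :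
    blkA lam x part k (Function.update β i c)
      = blkA lam x part k β + ((c - β i) / (lam * n)) • x i.1 := by
  rw [blkA, Finset.sum_apply_update
    (fun (j : {i : Fin n // part i = k}) t => (t / (lam * n)) • x j.1), sub_div, sub_smul]
  rfl

lemma locDual_update (β : {i : Fin n // part i = k} → ℝ) (i : {i : Fin n // part i = k})
    (c : ℝ) :
    locDual lam x lstar part k wbar (Function.update β i c)
      = locDual lam x lstar part k wbar β
        - lam / 2 * (2 * ((c - β i) / (lam * n)) * dotp (x i.1) (wbar + blkA lam x part k β)
          + ((c - β i) / (lam * n)) ^ 2 * sqnorm (x i.1))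
        - 1 / n * (lstar i.1 (-c) - lstar i.1 (-β i)) := by
  simp only [locDual, blkA_update, ← add_assoc, sqnorm_add_smul, dotp_comm (x i.1),
    Finset.sum_apply_update (fun (j : {i : Fin n // part i = k}) t => lstar j.1 (-t))]
  ring

lemma lam_mul_dotp_blkA (hlam : lam ≠ 0) (β : {i : Fin n // part i = k} → ℝ)
    (w : Fin d → ℝ) :
    lam * dotp w (blkA lam x part k β)
      = 1 / n * ∑ i : {i : Fin n // part i = k}, β i * dotp (x i.1) w := by
  simp only [dotp, blkA, Finset.sum_apply, Pi.smul_apply, smul_eq_mul, Finset.mul_sum]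
  rw [Finset.sum_comm]
  refine Finset.sum_congr rfl fun i _ => Finset.sum_congr rfl fun j _ => ?_
  field_simp

lemma locPrimal_sub_locDual (hlam : lam ≠ 0) (β : {i : Fin n // part i = k} → ℝ) :
    locPrimal lam x l part k wbar (blkA lam x part k β) - locDual lam x lstar part k wbar β
      = 1 / n * ∑ i : {i : Fin n // part i = k}, fenchelYoungGap (l i.1) (lstar i.1) (β i)
          (dotp (x i.1) (wbar + blkA lam x part k β)) := by
  have hquad := two_mul_dotp_add_self wbar (blkA lam x part k β)
  have hlin := lam_mul_dotp_blkA (x := x) hlam β (wbar + blkA lam x part k β)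
  simp only [locPrimal, locDual, fenchelYoungGap, Finset.sum_add_distrib, dotp_comm _ (x _)]
  linear_combination (-lam / 2) * hquad + hlin

lemma le_locDual_update_sub {γ : ℝ} (hlam : lam ≠ 0) (hn : (n : ℝ) ≠ 0)
    (β : {i : Fin n // part i = k} → ℝ) (i : {i : Fin n // part i = k})
    (hconj : IsFenchelConj (l i.1) (lstar i.1)) (hstrong : StrongConvexWith γ (lstar i.1))
    {u : ℝ} (hu : ∀ y, l i.1 (dotp (x i.1) (wbar + blkA lam x part k β))
      + -u * (y - dotp (x i.1) (wbar + blkA lam x part k β)) ≤ l i.1 y)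
    {s : ℝ} (hs0 : 0 ≤ s) (hs1 : s ≤ 1) :
    s / n * fenchelYoungGap (l i.1) (lstar i.1) (β i) (dotp (x i.1) (wbar + blkA lam x part k β))
        - 1 / (2 * lam * n ^ 2) *
          ((s ^ 2 * sqnorm (x i.1) - lam * n * γ * s * (1 - s)) * (u - β i) ^ 2)
      ≤ locDual lam x lstar part k wbar (Function.update β i (β i + s * (u - β i)))
        - locDual lam x lstar part k wbar β := by
  set z := dotp (x i.1) (wbar + blkA lam x part k β)
  have hfy : lstar i.1 (-u) = -u * z - l i.1 z := hconj.apply_eq_of_subgradient hu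
  have hconv := hstrong.apply_combo_le (-β i) (-u) hs0 hs1
  rw [hfy, show (1 - s) * -β i + s * -u = -(β i + s * (u - β i)) by ring] at hconv
  have hdrop : 0 ≤ 1 / n * ((1 - s) * lstar i.1 (-β i) + s * (-u * z - l i.1 z)
      - γ / 2 * (s * (1 - s)) * (-β i - -u) ^ 2 - lstar i.1 (-(β i + s * (u - β i)))) :=
    mul_nonneg (by positivity) (sub_nonneg.2 hconv)
  rw [← sub_nonneg, locDual_update, fenchelYoungGap]
  convert hdrop using 1
  field_simp
  ring

end Block

theorem sdca_one_step_improvement_general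
    (n d K : ℕ) (hn : 0 < n)
    (lam γ : ℝ) (hlam : 0 < lam)
    (x : Fin n → Fin d → ℝ)
    (l lstar : Fin n → ℝ → ℝ)
    (hconj : ∀ i, IsFenchelConj (l i) (lstar i))
    (hstrong : ∀ i, StrongConvexWith γ (lstar i))
    (part : Fin n → Fin K) (k : Fin K) (hk : ∃ i, part i = k)
    (wbar : Fin d → ℝ) (β : {i : Fin n // part i = k} → ℝ)
    (v w : Fin d → ℝ) (hv : v = blkA lam x part k β) (hw : w = wbar + v)
    -- subgradients: −u_i ∈ ∂ℓ_i(x_iᵀw)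
    (u : {i : Fin n // part i = k} → ℝ)
    (hu : ∀ (i : {i : Fin n // part i = k}) (y : ℝ),
      l i.1 (dotp (x i.1) w) + (-(u i)) * (y - dotp (x i.1) w) ≤ l i.1 y)
    -- one LocalSDCA step on coordinate `i`: replace `β i` by the maximizing value
    (st : {i : Fin n // part i = k} → ({i : Fin n // part i = k} → ℝ) →
      ({i : Fin n // part i = k} → ℝ))
    (hst_max : ∀ i β' c,
      locDual lam x lstar part k wbar (Function.update β' i c)
        ≤ locDual lam x lstar part k wbar (st i β'))
    (s : ℝ) (hs0 : 0 ≤ s) (hs1 : s ≤ 1) :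
    s / (Fintype.card {i : Fin n // part i = k} : ℝ) *
        (locPrimal lam x l part k wbar v - locDual lam x lstar part k wbar β)
      - 1 / (2 * lam * (n : ℝ) ^ 2) *
          (1 / (Fintype.card {i : Fin n // part i = k} : ℝ)) *
          ∑ i : {i : Fin n // part i = k},
            (s ^ 2 * sqnorm (x i.1) - lam * n * γ * s * (1 - s)) * (u i - β i) ^ 2
    ≤ (∑ i : {i : Fin n // part i = k}, locDual lam x lstar part k wbar (st i β))
          / (Fintype.card {i : Fin n // part i = k} : ℝ)
        - locDual lam x lstar part k wbar β := by
  subst hw hv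
  obtain ⟨i₀, hi₀⟩ := hk
  have : Nonempty {i : Fin n // part i = k} := ⟨⟨i₀, hi₀⟩⟩
  have hn0 : (n : ℝ) ≠ 0 := by exact_mod_cast hn.ne'
  refine Eq.trans_le ?_ (Finset.sum_div_card_le_sub fun i =>
    (le_locDual_update_sub hlam.ne' hn0 β i (hconj i.1) (hstrong i.1) (hu i) hs0 hs1).trans
      (sub_le_sub_right (hst_max i β _) _))
  rw [locPrimal_sub_locDual hlam.ne', Finset.sum_sub_distrib, ← Finset.mul_sum, ← Finset.mul_sum]
  ring

/-- expected improvement of one LocalSDCA step (Lemma 3). -/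
theorem sdca_one_step_improvement
    (n d K : ℕ) (hn : 0 < n) (hd : 0 < d) (hK : 0 < K)
    (lam γ : ℝ) (hlam : 0 < lam) (hγ : 0 ≤ γ)
    (x : Fin n → Fin d → ℝ)
    (l lstar : Fin n → ℝ → ℝ)
    (hconj : ∀ i, IsFenchelConj (l i) (lstar i))
    (hconv : ∀ i, ConvexOn ℝ Set.univ (l i))
    (hstrong : ∀ i, StrongConvexWith γ (lstar i))
    (part : Fin n → Fin K) (k : Fin K) (hk : ∃ i, part i = k)
    (wbar : Fin d → ℝ) (β : {i : Fin n // part i = k} → ℝ)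
    (v w : Fin d → ℝ) (hv : v = blkA lam x part k β) (hw : w = wbar + v)
    -- subgradients: −u_i ∈ ∂ℓ_i(x_iᵀw)
    (u : {i : Fin n // part i = k} → ℝ)
    (hu : ∀ (i : {i : Fin n // part i = k}) (y : ℝ),
      l i.1 (dotp (x i.1) w) + (-(u i)) * (y - dotp (x i.1) w) ≤ l i.1 y)
    -- one LocalSDCA step on coordinate `i`: replace `β i` by the maximizing value
    (st : {i : Fin n // part i = k} → ({i : Fin n // part i = k} → ℝ) →
      ({i : Fin n // part i = k} → ℝ))
    (hst_coord : ∀ i β' j, j ≠ i → st i β' j = β' j)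
    (hst_max : ∀ i β' c,
      locDual lam x lstar part k wbar (Function.update β' i c)
        ≤ locDual lam x lstar part k wbar (st i β'))
    (s : ℝ) (hs0 : 0 ≤ s) (hs1 : s ≤ 1) :
    s / (Fintype.card {i : Fin n // part i = k} : ℝ) *
        (locPrimal lam x l part k wbar v - locDual lam x lstar part k wbar β)
      - 1 / (2 * lam * (n : ℝ) ^ 2) *
          (1 / (Fintype.card {i : Fin n // part i = k} : ℝ)) *
          ∑ i : {i : Fin n // part i = k},
            (s ^ 2 * sqnorm (x i.1) - lam * n * γ * s * (1 - s)) * (u i - β i) ^ 2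
    ≤ (∑ i : {i : Fin n // part i = k}, locDual lam x lstar part k wbar (st i β))
          / (Fintype.card {i : Fin n // part i = k} : ℝ)
        - locDual lam x lstar part k wbar β :=
  sdca_one_step_improvement_general n d K hn lam γ hlam x l lstar hconj hstrong part k hk wbar β v w
    hv hw u hu st hst_max s hs0 hs1
end
end

section
/- For all w ∈ ℝ^d and α ∈ ℝ^n, the primal objective dominates the dual objective with a quadratic gap: P(w) − D(α) ≥ (λ/2)·‖w − Aα‖². In particular, the duality gap at the primal point w(α) := Aα is nonnegative: P(Aα) ≥ D(α). -/
open Finset MeasureTheory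

noncomputable section

variable {n d K : ℕ}

theorem IsFenchelConj.mul_le_add {f g : ℝ → ℝ} (h : IsFenchelConj f g) (u z : ℝ) :
    u * z ≤ f z + g u := by
  have := (h u).1 ⟨z, rfl⟩
  simp only at this
  linarith

theorem dotp_eq_dotProduct {m : ℕ} (u v : Fin m → ℝ) : dotp u v = u ⬝ᵥ v := rfl

theorem sqnorm_eq_dotProduct {m : ℕ} (v : Fin m → ℝ) : sqnorm v = v ⬝ᵥ v := by
  simp only [sqnorm, dotProduct, sq]

theorem sqnorm_sub {m : ℕ} (u v : Fin m → ℝ) :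
    sqnorm (u - v) = sqnorm u - 2 * dotp u v + sqnorm v := by
  simp only [sqnorm_eq_dotProduct, dotp_eq_dotProduct, sub_dotProduct, dotProduct_sub,
    dotProduct_comm v u]
  ring

theorem dotp_matA (lam : ℝ) (x : Fin n → Fin d → ℝ) (α : Fin n → ℝ) (u : Fin d → ℝ) :
    dotp u (matA lam x α) = ∑ i, α i / (lam * n) * dotp u (x i) := by
  simp only [matA, dotp_eq_dotProduct, dotProduct_sum, dotProduct_smul, smul_eq_mul]

/-- The `i`-th summand is the Fenchel–Young gap `ℓᵢ(z) + ℓᵢ*(u) - u z` at `z = wᵀxᵢ`, `u = -αᵢ`. -/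
theorem primalObj_sub_dualObj {lam : ℝ} (hlam : lam ≠ 0) (x : Fin n → Fin d → ℝ)
    (l lstar : Fin n → ℝ → ℝ) (w : Fin d → ℝ) (α : Fin n → ℝ) :
    primalObj lam x l w - dualObj lam x lstar α =
      lam / 2 * sqnorm (w - matA lam x α) +
        1 / (n : ℝ) * ∑ i, (l i (dotp w (x i)) + lstar i (-α i) + α i * dotp w (x i)) := by
  have hcross : lam * dotp w (matA lam x α) = 1 / (n : ℝ) * ∑ i, α i * dotp w (x i) := by
    simp only [dotp_matA, mul_sum, ← mul_assoc, mul_div, mul_div_mul_left _ _ hlam]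
    exact sum_congr rfl fun i _ => by ring
  simp only [primalObj, dualObj, sqnorm_sub, sum_add_distrib, mul_add]
  linarith

theorem weak_duality_quadratic_gap_general
    (n d : ℕ)
    (lam : ℝ) (hlam : 0 < lam)
    (x : Fin n → Fin d → ℝ)
    (l lstar : Fin n → ℝ → ℝ)
    (hconj : ∀ i, IsFenchelConj (l i) (lstar i))
    (w : Fin d → ℝ) (α : Fin n → ℝ) :
    lam / 2 * sqnorm (w - matA lam x α)
      ≤ primalObj lam x l w - dualObj lam x lstar α ∧
    dualObj lam x lstar α ≤ primalObj lam x l (matA lam x α) := by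
  have quadratic_gap : ∀ u, lam / 2 * sqnorm (u - matA lam x α)
      ≤ primalObj lam x l u - dualObj lam x lstar α := fun u => by
    rw [primalObj_sub_dualObj hlam.ne']
    refine le_add_of_nonneg_right (mul_nonneg (by positivity) (sum_nonneg fun i _ => ?_))
    linarith [(hconj i).mul_le_add (-α i) (dotp u (x i))]
  refine ⟨quadratic_gap w, ?_⟩
  have := quadratic_gap (matA lam x α)
  simp only [sub_self, sqnorm_eq_dotProduct, dotProduct_zero, mul_zero] at this
  linarith

/-- weak duality with quadratic gap. -/
theorem weak_duality_quadratic_gap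
    (n d : ℕ) (hn : 0 < n) (hd : 0 < d)
    (lam : ℝ) (hlam : 0 < lam)
    (x : Fin n → Fin d → ℝ)
    (l lstar : Fin n → ℝ → ℝ)
    (hconj : ∀ i, IsFenchelConj (l i) (lstar i))
    (w : Fin d → ℝ) (α : Fin n → ℝ) :
    lam / 2 * sqnorm (w - matA lam x α)
      ≤ primalObj lam x l w - dualObj lam x lstar α ∧
    dualObj lam x lstar α ≤ primalObj lam x l (matA lam x α) :=
  weak_duality_quadratic_gap_general n d lam hlam x l lstar hconj w α
end
end
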